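/- arXiv:1903.11028 — 2 statements merged into one kernel-verified Lean document; each statement's English description precedes it below -/
import Mathlib

section
/- Let n ≥ 1, let a₁, …, a_n ∈ ℕ^d, let S be the submonoid of ℕ^d generated by a₁, …, a_n, let G(S) be the subgroup of ℤ^d generated by a₁, …, a_n, and let f ∈ F(S) be a Frobenius element of S. Then f ∈ G(S) \ S, and for every b ∈ G(S) that can be written as b = Σ_{i=1}^n λ_i a_i with all λ_i strictly positive rational numbers (i.e., every b ∈ G(S) lying in the relative interior of the cone pos(S)), one has f + b ∈ S \ {0}. In other words, every Frobenius element of S is a Frobenius vector of S. -/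
open scoped BigOperators

/-- The natural cast of an element of `ℕ^d` into `ℚ^d`. -/
def toQ {d : ℕ} (x : Fin d → ℕ) : Fin d → ℚ := fun i => (x i : ℚ)

/-- The natural cast of an element of `ℕ^d` into `ℤ^d`. -/
def natToZ {d : ℕ} (x : Fin d → ℕ) : Fin d → ℤ := fun i => (x i : ℤ)

/-- The cone `pos(S)` of a submonoid `S ⊆ ℕ^d`: all nonnegative rational
combinations of elements of `S`, as a subset of `ℚ^d`. -/
def posCone {d : ℕ} (S : AddSubmonoid (Fin d → ℕ)) : Set (Fin d → ℚ) :=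
  {q | ∃ (k : ℕ) (c : Fin k → ℚ) (s : Fin k → (Fin d → ℕ)),
    (∀ i, 0 ≤ c i) ∧ (∀ i, s i ∈ S) ∧ q = ∑ i, c i • toQ (s i)}

/-- The gap set `H(S) = (pos(S) \ S) ∩ ℕ^d`. -/
def gaps {d : ℕ} (S : AddSubmonoid (Fin d → ℕ)) : Set (Fin d → ℕ) :=
  {x | toQ x ∈ posCone S ∧ x ∉ S}

/-- The set of pseudo-Frobenius elements of `S`. -/
def PF {d : ℕ} (S : AddSubmonoid (Fin d → ℕ)) : Set (Fin d → ℕ) :=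
  {a | a ∈ gaps S ∧ ∀ s ∈ S, s ≠ 0 → a + s ∈ S}

/-- A term order on `ℕ^d`: a total order compatible with addition for which
`0` is the least element. -/
def IsTermOrder {d : ℕ} (r : (Fin d → ℕ) → (Fin d → ℕ) → Prop) : Prop :=
  (∀ a b, r a b ∨ r b a) ∧ (∀ a b, r a b → r b a → a = b) ∧
    (∀ a b c, r a b → r b c → r a c) ∧ (∀ a, r 0 a) ∧
    (∀ a b c, r a b → r (a + c) (b + c))

/-- The set of Frobenius elements of `S`: maxima of `H(S)` for some term order. -/
def FrobSet {d : ℕ} (S : AddSubmonoid (Fin d → ℕ)) : Set (Fin d → ℕ) :=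
  {f | f ∈ gaps S ∧ ∃ r, IsTermOrder r ∧ ∀ h ∈ gaps S, r h f}

/-- The Apéry set of `S` relative to `b`:
`Ap(S,b) = {a ∈ S : a - b ∈ pos(S) \ S}`, the difference taken in `ℚ^d`. -/
def Apery {d : ℕ} (S : AddSubmonoid (Fin d → ℕ)) (b : Fin d → ℕ) : Set (Fin d → ℕ) :=
  {a | a ∈ S ∧ (toQ a - toQ b) ∈ posCone S ∧ ¬ ∃ s ∈ S, toQ s = toQ a - toQ b}

/-- The partial order `≼_S`: `x ≼_S y` iff `y - x ∈ S`. -/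
def leS {d : ℕ} (S : AddSubmonoid (Fin d → ℕ)) (x y : Fin d → ℕ) : Prop :=
  ∃ s ∈ S, x + s = y

/-- `a` is a `≼_S`-maximal element of `X`. -/
def MaximalIn {d : ℕ} (S : AddSubmonoid (Fin d → ℕ)) (X : Set (Fin d → ℕ))
    (a : Fin d → ℕ) : Prop :=
  a ∈ X ∧ ∀ a' ∈ X, a' ≠ a → ¬ leS S a a'

/-- `S` is irreducible: it is not the intersection of two submonoids of `ℕ^d`
each properly containing it. -/
def IrreducibleMonoid {d : ℕ} (S : AddSubmonoid (Fin d → ℕ)) : Prop :=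
  ¬ ∃ S₁ S₂ : AddSubmonoid (Fin d → ℕ), S < S₁ ∧ S < S₂ ∧
    (S : Set (Fin d → ℕ)) = (S₁ : Set (Fin d → ℕ)) ∩ (S₂ : Set (Fin d → ℕ))

/-- The multiplicity of `S`: componentwise infimum of `S \ {0}`. -/
noncomputable def mult {d : ℕ} (S : AddSubmonoid (Fin d → ℕ)) : Fin d → ℕ :=
  fun i => sInf {n | ∃ s ∈ S, s ≠ 0 ∧ s i = n}

/-- `S` is a PI-monoid: `S = (a + T) ∪ {0}` for some submonoid `T` of `ℕ^d`
and some `a ∈ T \ {0}`. -/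
def IsPIMonoid {d : ℕ} (S : AddSubmonoid (Fin d → ℕ)) : Prop :=
  ∃ (T : AddSubmonoid (Fin d → ℕ)) (a : Fin d → ℕ), a ∈ T ∧ a ≠ 0 ∧
    (S : Set (Fin d → ℕ)) = {x | ∃ t ∈ T, x = a + t} ∪ {0}

/-- `G` is a minimal system of generators of `S`. -/
def IsMinimalGenSet {d : ℕ} (S : AddSubmonoid (Fin d → ℕ)) (G : Set (Fin d → ℕ)) : Prop :=
  AddSubmonoid.closure G = S ∧ ∀ G' ⊂ G, AddSubmonoid.closure G' ≠ S

/-!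
A Frobenius element `f` is maximal among the gaps for a term order `≼`. For any nonzero
`x ∈ ℕ^d ∩ pos(S)`, the vector `f + x` again lies in `pos(S)` and satisfies `f ≺ f + x`
(translate `0 ≺ x` by `f`), so it cannot be a gap: `f + x ∈ S`. Taking `x` a nonzero element
of `S` shows `f = (f + x) - x ∈ G(S)`. An element `b` of the relative interior of `pos(S)` is a
positive combination of the nonnegative `aᵢ`, hence a nonzero vector of `ℕ^d ∩ pos(S)`, and
`f + b ∈ S \ {0}`.
-/

section Casts

variable {d : ℕ}

lemma toQ_add (x y : Fin d → ℕ) : toQ (x + y) = toQ x + toQ y := by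
  funext i; simp [toQ]

lemma toQ_nonneg (x : Fin d → ℕ) : 0 ≤ toQ x :=
  fun i => Nat.cast_nonneg (x i)

@[simp]
lemma toQ_zero : toQ (0 : Fin d → ℕ) = 0 := by
  funext i; simp [toQ]

@[simp]
lemma toQ_eq_zero {x : Fin d → ℕ} : toQ x = 0 ↔ x = 0 := by
  simp [toQ, funext_iff]

lemma natToZ_add (x y : Fin d → ℕ) : natToZ (x + y) = natToZ x + natToZ y := by
  funext i; simp [natToZ]

lemma natToZ_mem_closure_range {n : ℕ} (a : Fin n → Fin d → ℕ) {x : Fin d → ℕ}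
    (hx : x ∈ AddSubmonoid.closure (Set.range a)) :
    natToZ x ∈ AddSubgroup.closure (Set.range fun i => natToZ (a i)) := by
  induction hx using AddSubmonoid.closure_induction with
  | mem y hy =>
    obtain ⟨i, rfl⟩ := hy
    exact AddSubgroup.subset_closure ⟨i, rfl⟩
  | zero => exact zero_mem _
  | add y z _ _ hy hz => rw [natToZ_add]; exact add_mem hy hz

end Casts

section Cone

variable {d : ℕ} {S : AddSubmonoid (Fin d → ℕ)}

lemma toQ_mem_posCone {x : Fin d → ℕ} (hx : x ∈ S) : toQ x ∈ posCone S :=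
  ⟨1, fun _ => 1, fun _ => x, fun _ => zero_le_one, fun _ => hx, by simp⟩

lemma add_mem_posCone {p q : Fin d → ℚ} (hp : p ∈ posCone S) (hq : q ∈ posCone S) :
    p + q ∈ posCone S := by
  obtain ⟨k, c, s, hc, hs, rfl⟩ := hp
  obtain ⟨l, c', s', hc', hs', rfl⟩ := hq
  refine ⟨k + l, Fin.append c c', Fin.append s s',
    Fin.addCases (by simpa using hc) (by simpa using hc'),
    Fin.addCases (by simpa using hs) (by simpa using hs'), ?_⟩
  simp [Fin.sum_univ_add]

lemma exists_mem_ne_zero_of_mem_posCone {q : Fin d → ℚ} (hq : q ∈ posCone S) (hq0 : q ≠ 0) :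
    ∃ s ∈ S, s ≠ 0 := by
  obtain ⟨k, c, s, -, hs, rfl⟩ := hq
  by_contra! hS
  exact hq0 (Finset.sum_eq_zero fun i _ => by simp [hS _ (hs i)])

lemma ne_zero_of_mem_gaps {x : Fin d → ℕ} (hx : x ∈ gaps S) : x ≠ 0 := by
  rintro rfl
  exact hx.2 S.zero_mem

lemma add_mem_of_mem_frobSet {f x : Fin d → ℕ} (hf : f ∈ FrobSet S)
    (hx : toQ x ∈ posCone S) (hx0 : x ≠ 0) : f + x ∈ S := by
  obtain ⟨⟨hf_cone, -⟩, r, ⟨-, hantisymm, -, hzero, hadd⟩, hmax⟩ := hf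
  by_contra hfx
  have hgap : f + x ∈ gaps S := ⟨by rw [toQ_add]; exact add_mem_posCone hf_cone hx, hfx⟩
  have hle : r f (f + x) := by simpa [add_comm x f] using hadd 0 x f (hzero x)
  exact hx0 (by simpa using hantisymm _ _ (hmax _ hgap) hle)

end Cone

section Generators

variable {d n : ℕ} {a : Fin n → Fin d → ℕ}

lemma exists_ne_zero_of_mem_closure_range {s : Fin d → ℕ}
    (hs : s ∈ AddSubmonoid.closure (Set.range a)) (hs0 : s ≠ 0) : ∃ i, a i ≠ 0 := by
  by_contra! ha
  have hbot : AddSubmonoid.closure (Set.range a) ≤ ⊥ :=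
    AddSubmonoid.closure_le.2 (by rintro _ ⟨i, rfl⟩; exact ha i)
  exact hs0 (AddSubmonoid.mem_bot.1 (hbot hs))

lemma sum_smul_toQ_ne_zero {c : Fin n → ℚ} (hc : ∀ i, 0 < c i) (ha : ∃ i, a i ≠ 0) :
    ∑ i, c i • toQ (a i) ≠ 0 := by
  obtain ⟨i, hi⟩ := ha
  intro hsum
  have hterm := (Finset.sum_eq_zero_iff_of_nonneg
    (fun j _ => smul_nonneg (hc j).le (toQ_nonneg (a j)))).1 hsum i (Finset.mem_univ i)
  exact hi (toQ_eq_zero.1 ((smul_eq_zero.1 hterm).resolve_left (hc i).ne'))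

lemma exists_natToZ_eq_of_eq_sum_pos_smul {b : Fin d → ℤ} {c : Fin n → ℚ} (hc : ∀ i, 0 < c i)
    (hb : (fun i => (b i : ℚ)) = ∑ i, c i • toQ (a i))
    (ha : ∃ i, a i ≠ 0) :
    ∃ x : Fin d → ℕ, natToZ x = b ∧ x ≠ 0 ∧
      toQ x ∈ posCone (AddSubmonoid.closure (Set.range a)) := by
  have hsum_nonneg : 0 ≤ ∑ i, c i • toQ (a i) :=
    Finset.sum_nonneg fun i _ => smul_nonneg (hc i).le (toQ_nonneg (a i))
  have hb_nonneg : ∀ j, 0 ≤ b j := fun j =>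
    Int.cast_nonneg_iff.1 ((hb.symm ▸ hsum_nonneg : 0 ≤ fun i => (b i : ℚ)) j)
  lift b to Fin d → ℕ using hb_nonneg
  have hb' : toQ b = ∑ i, c i • toQ (a i) := by
    rw [← hb]; funext j; simp [toQ]
  refine ⟨b, rfl, ?_, ⟨n, c, a, fun i => (hc i).le,
    fun i => AddSubmonoid.subset_closure ⟨i, rfl⟩, hb'⟩⟩
  rintro rfl
  exact sum_smul_toQ_ne_zero hc ha (by simpa using hb'.symm)

end Generators

theorem frobenius_is_frobenius_vector_general {d n : ℕ}
    (a : Fin n → (Fin d → ℕ)) (S : AddSubmonoid (Fin d → ℕ))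
    (hS : S = AddSubmonoid.closure (Set.range a))
    (G : AddSubgroup (Fin d → ℤ))
    (hG : G = AddSubgroup.closure (Set.range fun i => natToZ (a i)))
    (f : Fin d → ℕ) (hf : f ∈ FrobSet S) :
    (natToZ f ∈ G ∧ f ∉ S) ∧
      ∀ b : Fin d → ℤ, b ∈ G →
        (∃ c : Fin n → ℚ, (∀ i, 0 < c i) ∧
          (fun i => (b i : ℚ)) = ∑ i, c i • toQ (a i)) →
        ∃ s ∈ S, s ≠ 0 ∧ natToZ s = natToZ f + b := by
  subst hS hG
  have hf0 : f ≠ 0 := ne_zero_of_mem_gaps hf.1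
  obtain ⟨s, hs, hs0⟩ := exists_mem_ne_zero_of_mem_posCone hf.1.1 (toQ_eq_zero.not.2 hf0)
  refine ⟨⟨?_, hf.1.2⟩, ?_⟩
  · have hfs := add_mem_of_mem_frobSet hf (toQ_mem_posCone hs) hs0
    simpa [natToZ_add] using
      sub_mem (natToZ_mem_closure_range a hfs) (natToZ_mem_closure_range a hs)
  · rintro b - ⟨c, hc, hb⟩
    obtain ⟨x, rfl, hx0, hx⟩ :=
      exists_natToZ_eq_of_eq_sum_pos_smul hc hb (exists_ne_zero_of_mem_closure_range hs hs0)
    exact ⟨f + x, add_mem_of_mem_frobSet hf hx hx0, fun h => hf0 (add_eq_zero.1 h).1,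
      natToZ_add f x⟩

/-- Every Frobenius element `f` of `S = ⟨a₁,…,aₙ⟩` is a Frobenius
vector: `f ∈ G(S) \ S` and `f + b ∈ S \ {0}` for every `b ∈ G(S)` lying in the
relative interior of `pos(S)`. -/
theorem frobenius_is_frobenius_vector {d n : ℕ} (hd : 1 ≤ d) (hn : 1 ≤ n)
    (a : Fin n → (Fin d → ℕ)) (S : AddSubmonoid (Fin d → ℕ))
    (hS : S = AddSubmonoid.closure (Set.range a))
    (G : AddSubgroup (Fin d → ℤ))
    (hG : G = AddSubgroup.closure (Set.range fun i => natToZ (a i)))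
    (f : Fin d → ℕ) (hf : f ∈ FrobSet S) :
    (natToZ f ∈ G ∧ f ∉ S) ∧
      ∀ b : Fin d → ℤ, b ∈ G →
        (∃ c : Fin n → ℚ, (∀ i, 0 < c i) ∧
          (fun i => (b i : ℚ)) = ∑ i, c i • toQ (a i)) →
        ∃ s ∈ S, s ≠ 0 ∧ natToZ s = natToZ f + b :=
  frobenius_is_frobenius_vector_general a S hS G hG f hf
end

section
/- Let S be a submonoid of ℕ^d with H(S) finite and let a ∈ PF(S) be a pseudo-Frobenius element of S with 2a ∈ S. Then S ∪ {a} is a submonoid of ℕ^d with pos(S ∪ {a}) = pos(S) and H(S ∪ {a}) ⊆ H(S); in particular H(S ∪ {a}) is finite, so if S is a C-semigroup then S ∪ {a} is again a C-semigroup. -/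
open scoped BigOperators

lemma toQ_nsmul {d : ℕ} (n : ℕ) (x : Fin d → ℕ) : toQ (n • x) = (n : ℚ) • toQ x := by
  funext i; simp [toQ]

def AddSubmonoid.unionSingleton {M : Type*} [AddCommMonoid M] (S : AddSubmonoid M) (a : M)
    (hpf : ∀ s ∈ S, s ≠ 0 → a + s ∈ S) (h2a : a + a ∈ S) : AddSubmonoid M where
  carrier := (S : Set M) ∪ {a}
  zero_mem' := Or.inl S.zero_mem
  add_mem' := by
    have absorb : ∀ s ∈ S, a + s ∈ (S : Set M) ∪ {a} := fun s hs => by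
      by_cases hs0 : s = 0
      · simp [hs0]
      · exact Or.inl (hpf s hs hs0)
    rintro x y (hx | rfl) (hy | rfl)
    · exact Or.inl (S.add_mem hx hy)
    · rw [add_comm]; exact absorb x hx
    · exact absorb y hy
    · exact Or.inl h2a

lemma posCone_mono {d : ℕ} {S T : AddSubmonoid (Fin d → ℕ)} (hST : S ≤ T) :
    posCone S ⊆ posCone T := by
  rintro q ⟨k, c, s, hc, hs, rfl⟩
  exact ⟨k, c, s, hc, fun i => hST (hs i), rfl⟩

lemma posCone_subset_of_forall_exists_nsmul_mem {d : ℕ} {S T : AddSubmonoid (Fin d → ℕ)}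
    (hTS : ∀ t ∈ T, ∃ n ≠ 0, n • t ∈ S) : posCone T ⊆ posCone S := by
  rintro q ⟨k, c, s, hc, hs, rfl⟩
  choose n hn hnS using fun i => hTS (s i) (hs i)
  refine ⟨k, fun i => c i / n i, fun i => n i • s i, fun i => div_nonneg (hc i) (n i).cast_nonneg,
    hnS, Finset.sum_congr rfl fun i _ => ?_⟩
  rw [toQ_nsmul, smul_smul, div_mul_cancel₀ _ (Nat.cast_ne_zero.mpr (hn i))]

lemma gaps_subset_gaps {d : ℕ} {S T : AddSubmonoid (Fin d → ℕ)} (hST : S ≤ T)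
    (hpos : posCone T ⊆ posCone S) : gaps T ⊆ gaps S :=
  fun _ ⟨hx, hxT⟩ => ⟨hpos hx, fun hxS => hxT (hST hxS)⟩

/-- If `H(S)` is finite, `a ∈ PF(S)` and `2a ∈ S`, then
`S ∪ {a}` is a submonoid with the same cone, `H(S ∪ {a}) ⊆ H(S)`, and in
particular `H(S ∪ {a})` is finite. -/
theorem union_pf_csemigroup {d : ℕ} (S : AddSubmonoid (Fin d → ℕ))
    (hfin : (gaps S).Finite) (a : Fin d → ℕ) (ha : a ∈ PF S)
    (h2a : a + a ∈ S) :
    ∃ S' : AddSubmonoid (Fin d → ℕ),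
      (S' : Set (Fin d → ℕ)) = (S : Set (Fin d → ℕ)) ∪ {a} ∧
        posCone S' = posCone S ∧ gaps S' ⊆ gaps S ∧ (gaps S').Finite := by
  set S' := S.unionSingleton a ha.2 h2a
  have hle : S ≤ S' := fun _ => Or.inl
  have hdouble : ∀ t ∈ S', ∃ n ≠ 0, n • t ∈ S := by
    rintro t (ht | rfl)
    · exact ⟨2, two_ne_zero, S.nsmul_mem ht 2⟩
    · exact ⟨2, two_ne_zero, (two_nsmul t).symm ▸ h2a⟩
  have hpos : posCone S' ⊆ posCone S := posCone_subset_of_forall_exists_nsmul_mem hdouble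
  have hgaps : gaps S' ⊆ gaps S := gaps_subset_gaps hle hpos
  exact ⟨S', rfl, hpos.antisymm (posCone_mono hle), hgaps, hfin.subset hgaps⟩
end
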